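/- arXiv:0910.1923 — 2 statements merged into one kernel-verified Lean document; each statement's English description precedes it below -/
import Mathlib

section
/- Let X₁, …, X_d be affinely independent points in ℤ^d with |X_i^j| ≤ m for all i, j, and let H be the affine hull of {X₁, …, X_d}. If H does not contain the origin O, then the Euclidean distance from O to H is at least (2m√d)^{-(d-1)}. -/
/-!
Since `0 ∉ H`, the points `Yᵢ` are linearly independent, so the integer matrix `M` with rows `Yᵢ`
has `|det M| ≥ 1`, and `u = M⁻¹ 𝟙` satisfies `⟪u, y⟫ = 1` on `H`; hence `dist(0, H) ≥ 1 / ‖u‖`.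
By Cramer's rule and Hadamard's inequality every coordinate of `u` is at most
`‖𝟙‖ (√d m)^(d-1) = √d (√d m)^(d-1)`, so `‖u‖ ≤ d (√d m)^(d-1) ≤ (2 m √d)^(d-1)`.
-/

open scoped RealInnerProductSpace Matrix

theorem EuclideanSpace.norm_le_sqrt_card_mul {ι : Type*} [Fintype ι]
    {x : EuclideanSpace ℝ ι} {c : ℝ} (hc : 0 ≤ c) (hx : ∀ i, |x i| ≤ c) :
    ‖x‖ ≤ √(Fintype.card ι) * c := by
  have hsum : ∑ i, ‖x i‖ ^ 2 ≤ Fintype.card ι * c ^ 2 := by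
    calc ∑ i, ‖x i‖ ^ 2 ≤ ∑ _i : ι, c ^ 2 :=
          Finset.sum_le_sum fun i _ => pow_le_pow_left₀ (norm_nonneg _) (hx i) 2
      _ = Fintype.card ι * c ^ 2 := by simp
  calc ‖x‖ = √(∑ i, ‖x i‖ ^ 2) := EuclideanSpace.norm_eq x
    _ ≤ √(Fintype.card ι * c ^ 2) := Real.sqrt_le_sqrt hsum
    _ = √(Fintype.card ι) * c := by rw [Real.sqrt_mul (Nat.cast_nonneg _), Real.sqrt_sq hc]

/-- Hadamard's inequality. In the Gram–Schmidt orthonormal basis `b` of the columns `f`,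
the matrix of `f` is triangular with diagonal `⟪b j, f j⟫`. -/
theorem Matrix.abs_det_le_prod_norm_col {d : ℕ} (A : Matrix (Fin d) (Fin d) ℝ) :
    |A.det| ≤ ∏ j, ‖(WithLp.toLp 2 (Aᵀ j) : EuclideanSpace ℝ (Fin d))‖ := by
  set f : Fin d → EuclideanSpace ℝ (Fin d) := fun j => WithLp.toLp 2 (Aᵀ j)
  have hd : Module.finrank ℝ (EuclideanSpace ℝ (Fin d)) = Fintype.card (Fin d) := by simp
  set b := InnerProductSpace.gramSchmidtOrthonormalBasis hd f
  set e := EuclideanSpace.basisFun (Fin d) ℝ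
  have hA : A.det = e.toBasis.det b * b.toBasis.det f := by
    have hmat : e.toBasis.toMatrix f = A := by
      ext i j
      simp [Module.Basis.toMatrix_apply, e, f]
    rw [← hmat, ← Module.Basis.det_apply]
    conv_lhs => rw [e.toBasis.det.eq_smul_basis_det b.toBasis]
    rw [AlternatingMap.smul_apply, smul_eq_mul, b.coe_toBasis]
  have he : |e.toBasis.det b| = 1 := by
    rcases e.det_to_matrix_orthonormalBasis_real b with h | h <;> simp [h]
  rw [hA, abs_mul, he, one_mul, InnerProductSpace.gramSchmidtOrthonormalBasis_det,
    Finset.abs_prod]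
  gcongr with j
  calc |⟪b j, f j⟫| ≤ ‖b j‖ * ‖f j‖ := abs_real_inner_le_norm _ _
    _ = ‖f j‖ := by rw [b.orthonormal.1 j, one_mul]

theorem Matrix.abs_cramer_le {n : ℕ} {A : Matrix (Fin (n + 1)) (Fin (n + 1)) ℝ} {c : ℝ}
    (hc : 0 ≤ c) (hA : ∀ i j, |A i j| ≤ c) (b : Fin (n + 1) → ℝ) (j : Fin (n + 1)) :
    |A.cramer b j| ≤ ‖(WithLp.toLp 2 b : EuclideanSpace ℝ (Fin (n + 1)))‖ * (√(n + 1) * c) ^ n := by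
  have hcol : ∀ k ≠ j,
      ‖(WithLp.toLp 2 ((A.updateCol j b)ᵀ k) : EuclideanSpace ℝ (Fin (n + 1)))‖ ≤
        √(n + 1) * c := by
    intro k hk
    convert EuclideanSpace.norm_le_sqrt_card_mul hc fun i => ?_ using 3
    · simp
    · simpa [Matrix.updateCol_ne hk] using hA i k
  rw [Matrix.cramer_apply]
  refine (Matrix.abs_det_le_prod_norm_col _).trans ?_
  rw [← Finset.mul_prod_erase _ _ (Finset.mem_univ j)]
  gcongr
  · exact le_of_eq (by congr 2; ext i; simp)
  · calc _ ≤ ∏ _k ∈ Finset.univ.erase j, √(n + 1) * c :=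
          Finset.prod_le_prod (fun _ _ => norm_nonneg _) fun k hk =>
            hcol k (Finset.ne_of_mem_erase hk)
      _ = (√(n + 1) * c) ^ n := by simp

theorem Matrix.norm_inv_mulVec_le {n : ℕ} {A : Matrix (Fin (n + 1)) (Fin (n + 1)) ℝ} {c : ℝ}
    (hc : 0 ≤ c) (hA : ∀ i j, |A i j| ≤ c) (hdet : 1 ≤ |A.det|) (b : Fin (n + 1) → ℝ) :
    ‖(WithLp.toLp 2 (A⁻¹ *ᵥ b) : EuclideanSpace ℝ (Fin (n + 1)))‖ ≤
      √(n + 1) * (‖(WithLp.toLp 2 b : EuclideanSpace ℝ (Fin (n + 1)))‖ * (√(n + 1) * c) ^ n) := by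
  convert EuclideanSpace.norm_le_sqrt_card_mul
    (c := ‖(WithLp.toLp 2 b : EuclideanSpace ℝ (Fin (n + 1)))‖ * (√(n + 1) * c) ^ n)
    (by positivity) fun j => ?_ using 2
  · simp
  rw [Matrix.inv_def, Ring.inverse_eq_inv, Matrix.smul_mulVec, ← Matrix.cramer_eq_adjugate_mulVec]
  calc |(A.det⁻¹ • A.cramer b) j| = |A.det|⁻¹ * |A.cramer b j| := by simp
    _ ≤ 1 * |A.cramer b j| := by gcongr; exact inv_le_one_of_one_le₀ hdet
    _ ≤ _ := by rw [one_mul]; exact Matrix.abs_cramer_le hc hA b j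

theorem Matrix.norm_inv_mulVec_one_le {n : ℕ} {A : Matrix (Fin (n + 1)) (Fin (n + 1)) ℝ} {c : ℝ}
    (hc : 0 ≤ c) (hA : ∀ i j, |A i j| ≤ c) (hdet : 1 ≤ |A.det|) :
    ‖(WithLp.toLp 2 (A⁻¹ *ᵥ 1) : EuclideanSpace ℝ (Fin (n + 1)))‖ ≤ (2 * c * √(n + 1)) ^ n := by
  have hone : ‖(WithLp.toLp 2 1 : EuclideanSpace ℝ (Fin (n + 1)))‖ = √(n + 1) := by
    simp [EuclideanSpace.norm_eq]
  have hsucc : (n : ℝ) + 1 ≤ 2 ^ n := by exact_mod_cast Nat.lt_two_pow_self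
  calc _ ≤ √(n + 1) * (√(n + 1) * (√(n + 1) * c) ^ n) := by
        simpa [hone] using Matrix.norm_inv_mulVec_le hc hA hdet 1
    _ = (n + 1) * (√(n + 1) * c) ^ n := by
        rw [← mul_assoc, Real.mul_self_sqrt (by positivity)]
    _ ≤ 2 ^ n * (√(n + 1) * c) ^ n := by gcongr
    _ = (2 * c * √(n + 1)) ^ n := by ring

theorem Matrix.one_le_abs_det_map_intCast {ι R : Type*} [Fintype ι] [DecidableEq ι]
    [CommRing R] [LinearOrder R] [IsStrictOrderedRing R] {A : Matrix ι ι ℤ}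
    (hA : (A.map ((↑) : ℤ → R)).det ≠ 0) :
    1 ≤ |(A.map ((↑) : ℤ → R)).det| := by
  rw [← Int.cast_det] at hA ⊢
  exact_mod_cast Int.one_le_abs (by exact_mod_cast hA)

theorem AffineIndependent.linearIndependent_of_zero_notMem_affineSpan {k V ι : Type*} [Field k]
    [AddCommGroup V] [Module k V] {p : ι → V} (hp : AffineIndependent k p)
    (h0 : (0 : V) ∉ affineSpan k (Set.range p)) : LinearIndependent k p := by
  rw [linearIndependent_iff']
  intro s g hg
  by_cases hs : ∑ i ∈ s, g i = 0
  · exact affineIndependent_iff.mp hp s g hs hg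
  · have hw : ∑ i ∈ s, (∑ j ∈ s, g j)⁻¹ * g i = 1 := by rw [← Finset.mul_sum, inv_mul_cancel₀ hs]
    have hmem := affineCombination_mem_affineSpan hw p
    rw [s.affineCombination_eq_linear_combination p _ hw] at hmem
    simp_rw [mul_smul, ← Finset.smul_sum, hg, smul_zero] at hmem
    exact absurd hmem h0

theorem inv_norm_le_infDist_zero_affineSpan {E : Type*} [NormedAddCommGroup E]
    [InnerProductSpace ℝ E] {s : Set E} (hs : s.Nonempty) {u : E} (hu : ∀ x ∈ s, ⟪u, x⟫ = 1) :
    ‖u‖⁻¹ ≤ Metric.infDist 0 (affineSpan ℝ s : Set E) := by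
  have hspan : ∀ y ∈ affineSpan ℝ s, ⟪u, y⟫ = 1 :=
    AffineMap.eqOn_affineSpan (f := (innerₛₗ ℝ u).toAffineMap)
      (g := AffineMap.const ℝ E (1 : ℝ)) hu
  rw [Metric.le_infDist (hs.mono (subset_affineSpan ℝ s))]
  intro y hy
  have h1 : 1 ≤ ‖u‖ * ‖y‖ := (hspan y hy).symm.le.trans (real_inner_le_norm u y)
  rw [dist_zero_left]
  have hu0 : 0 < ‖u‖ := by
    by_contra! h
    norm_num [le_antisymm h (norm_nonneg u)] at h1
  exact (inv_le_iff_one_le_mul₀' hu0).2 h1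

theorem stmt1_general (n : ℕ) (m : ℕ) (X : Fin (n + 1) → (Fin (n + 1) → ℤ))
    (hbound : ∀ i j, |X i j| ≤ (m : ℤ))
    (Y : Fin (n + 1) → EuclideanSpace ℝ (Fin (n + 1)))
    (hY : ∀ i j, Y i j = (X i j : ℝ))
    (hindep : AffineIndependent ℝ Y)
    (hO : (0 : EuclideanSpace ℝ (Fin (n + 1))) ∉
      (affineSpan ℝ (Set.range Y) : Set (EuclideanSpace ℝ (Fin (n + 1))))) :
    Metric.infDist (0 : EuclideanSpace ℝ (Fin (n + 1)))
        (affineSpan ℝ (Set.range Y) : Set (EuclideanSpace ℝ (Fin (n + 1)))) ≥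
      1 / (2 * m * Real.sqrt (n + 1)) ^ n := by
  set M := (Matrix.of X).map ((↑) : ℤ → ℝ)
  have hMY : M.row = fun i => (Y i).ofLp := by
    ext i j
    exact (hY i j).symm
  have hM : IsUnit M.det := by
    rw [← Matrix.isUnit_iff_isUnit_det, ← Matrix.linearIndependent_rows_iff_isUnit, hMY]
    exact (hindep.linearIndependent_of_zero_notMem_affineSpan hO).map'
      (WithLp.linearEquiv 2 ℝ (Fin (n + 1) → ℝ)).toLinearMap (LinearEquiv.ker _)
  have hMbound : ∀ i j, |M i j| ≤ m := fun i j => by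
    simpa [M] using (Int.cast_le (R := ℝ)).2 (hbound i j)
  set u : EuclideanSpace ℝ (Fin (n + 1)) := WithLp.toLp 2 (M⁻¹ *ᵥ 1)
  have hu : ∀ y ∈ Set.range Y, ⟪u, y⟫ = 1 := by
    rintro - ⟨i, rfl⟩
    rw [EuclideanSpace.inner_eq_star_dotProduct, star_trivial, WithLp.ofLp_toLp,
      ← congrFun hMY i]
    change (M *ᵥ (M⁻¹ *ᵥ 1)) i = 1
    rw [Matrix.mulVec_mulVec, Matrix.mul_nonsing_inv _ hM, Matrix.one_mulVec, Pi.one_apply]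
  have hu0 : 0 < ‖u‖ :=
    norm_pos_iff.2 fun h => by simpa [h] using hu _ (Set.mem_range_self 0)
  calc 1 / (2 * m * √(n + 1)) ^ n ≤ ‖u‖⁻¹ := by
        rw [one_div]
        exact inv_anti₀ hu0 (Matrix.norm_inv_mulVec_one_le (Nat.cast_nonneg m) hMbound
          (Matrix.one_le_abs_det_map_intCast hM.ne_zero))
    _ ≤ _ := inv_norm_le_infDist_zero_affineSpan (Set.range_nonempty Y) hu

/-- Schürmann's lattice bound: if `X₁, …, X_d` are affinely independent integer points in
`ℤ^d` (here `d = n+1`) with all coordinates bounded by `m`, and their affine hull `H` does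
not contain the origin, then the distance from the origin to `H` is at least
`(2m√d)^{-(d-1)}`. -/
theorem stmt1 (n : ℕ) (m : ℕ) (hm : 0 < m) (X : Fin (n + 1) → (Fin (n + 1) → ℤ))
    (hbound : ∀ i j, |X i j| ≤ (m : ℤ))
    (Y : Fin (n + 1) → EuclideanSpace ℝ (Fin (n + 1)))
    (hY : ∀ i j, Y i j = (X i j : ℝ))
    (hindep : AffineIndependent ℝ Y)
    (hO : (0 : EuclideanSpace ℝ (Fin (n + 1))) ∉
      (affineSpan ℝ (Set.range Y) : Set (EuclideanSpace ℝ (Fin (n + 1))))) :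
    Metric.infDist (0 : EuclideanSpace ℝ (Fin (n + 1)))
        (affineSpan ℝ (Set.range Y) : Set (EuclideanSpace ℝ (Fin (n + 1)))) ≥
      1 / (2 * m * Real.sqrt (n + 1)) ^ n :=
  stmt1_general n m X hbound Y hY hindep hO
end

section
/- Let S ⊆ ℝ^d be finite and p ∈ conv(S). A subset A ⊆ S is minimal (under inclusion) with the property p ∈ conv(A) if and only if the subsystem {x · (q − p) > 0 : q ∈ A} is an irreducible infeasible subsystem, i.e., it is infeasible but every proper subsystem is feasible. -/
open scoped RealInnerProductSpace

/- Gordan-type alternative. One direction is convexity of an open half-space, the other is strict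
separation of `p` from the compact set `conv A`, with the separating functional represented by a
vector (Riesz). -/
theorem mem_convexHull_iff_not_exists_inner_sub_pos {E : Type*} [NormedAddCommGroup E]
    [InnerProductSpace ℝ E] [CompleteSpace E] (A : Finset E) (p : E) :
    p ∈ convexHull ℝ (A : Set E) ↔ ¬ ∃ x : E, ∀ q ∈ A, 0 < ⟪x, q - p⟫ := by
  constructor
  · rintro hp ⟨x, hx⟩
    have hA : (A : Set E) ⊆ {y | ⟪x, p⟫ < ⟪x, y⟫} := fun q hq => by
      simpa [inner_sub_right] using hx q hq
    have hpp : ⟪x, p⟫ < ⟪x, p⟫ :=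
      convexHull_min hA (convex_halfSpace_gt (innerₛₗ ℝ x).isLinear _) hp
    exact hpp.false
  · intro h
    by_contra hp
    obtain ⟨f, u, hfp, hfA⟩ := geometric_hahn_banach_point_closed (convex_convexHull ℝ _)
      (A.finite_toSet.isCompact_convexHull ℝ).isClosed hp
    refine h ⟨(InnerProductSpace.toDual ℝ E).symm f, fun q hq => ?_⟩
    have hlt : f p < f q := hfp.trans (hfA q (subset_convexHull ℝ _ hq))
    simpa [inner_sub_right, InnerProductSpace.toDual_symm_apply] using hlt

theorem stmt8_general (d : ℕ)
    (p : EuclideanSpace ℝ (Fin d))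
    (A : Finset (EuclideanSpace ℝ (Fin d))) :
    (p ∈ convexHull ℝ (A : Set (EuclideanSpace ℝ (Fin d))) ∧
        ∀ B ⊂ A, p ∉ convexHull ℝ (B : Set (EuclideanSpace ℝ (Fin d)))) ↔
      ((¬ ∃ x : EuclideanSpace ℝ (Fin d), ∀ q ∈ A, 0 < ⟪x, q - p⟫) ∧
        ∀ B ⊂ A, ∃ x : EuclideanSpace ℝ (Fin d), ∀ q ∈ B, 0 < ⟪x, q - p⟫) := by
  simp only [mem_convexHull_iff_not_exists_inner_sub_pos, not_not]

/-- For `S ⊆ ℝ^d` finite and `p ∈ conv(S)`: a subset `A ⊆ S` is inclusion-minimal with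
`p ∈ conv(A)` if and only if the subsystem `{x · (q − p) > 0 : q ∈ A}` is an irreducible
infeasible subsystem (infeasible, but every proper subsystem feasible). -/
theorem stmt8 (d : ℕ) (S : Finset (EuclideanSpace ℝ (Fin d)))
    (p : EuclideanSpace ℝ (Fin d))
    (hp : p ∈ convexHull ℝ (S : Set (EuclideanSpace ℝ (Fin d))))
    (A : Finset (EuclideanSpace ℝ (Fin d))) (hA : A ⊆ S) :
    (p ∈ convexHull ℝ (A : Set (EuclideanSpace ℝ (Fin d))) ∧
        ∀ B ⊂ A, p ∉ convexHull ℝ (B : Set (EuclideanSpace ℝ (Fin d)))) ↔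
      ((¬ ∃ x : EuclideanSpace ℝ (Fin d), ∀ q ∈ A, 0 < ⟪x, q - p⟫) ∧
        ∀ B ⊂ A, ∃ x : EuclideanSpace ℝ (Fin d), ∀ q ∈ B, 0 < ⟪x, q - p⟫) :=
  stmt8_general d p A
end
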